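/- arXiv:2312.09436 — 2 statements merged into one kernel-verified Lean document; each statement's English description precedes it below -/
import Mathlib

section
/- Let K ≥ 1, θ > 0, and nonnegative reals l_1, …, l_{K+1} with l_1 + ⋯ + l_{K+1} = D. Then (1/2)θ·l_1² + (1/4)θ·(l_2² + ⋯ + l_K²) + (1/2)θ·l_{K+1}² ≥ (θ/(4K))·D², with equality if and only if l_1 = l_{K+1} = D/(2K) and l_2 = ⋯ = l_K = D/K. -/
/-!
Weighted Cauchy–Schwarz with the weights `w = θ/2, θ/4, …, θ/4, θ/2`: completing the square,
`∑ wᵢ lᵢ² = ∑ wᵢ (lᵢ - cᵢ)² + D² / ∑ wᵢ⁻¹` with `cᵢ = D / (wᵢ ∑ wⱼ⁻¹)`, and here `∑ wᵢ⁻¹ = 4K/θ`.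
-/

open Finset

section WeightedSumSq

variable {ι : Type*} [Fintype ι] {w l : ι → ℝ}

theorem sum_mul_sq_eq_sum_mul_sub_sq_add (hw : ∀ i, w i ≠ 0) (hS : ∑ i, (w i)⁻¹ ≠ 0) :
    ∑ i, w i * l i ^ 2 =
      ∑ i, w i * (l i - (∑ j, l j) / ((∑ j, (w j)⁻¹) * w i)) ^ 2 +
        (∑ i, l i) ^ 2 / ∑ i, (w i)⁻¹ := by
  set S := ∑ j, (w j)⁻¹
  set D := ∑ j, l j
  have expand : ∀ i, w i * (l i - D / (S * w i)) ^ 2 =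
      w i * l i ^ 2 - 2 * D / S * l i + D ^ 2 / S ^ 2 * (w i)⁻¹ := by
    intro i
    field_simp [hw i]
    ring
  rw [sum_congr rfl fun i _ => expand i, sum_add_distrib, sum_sub_distrib, ← mul_sum, ← mul_sum,
    show ∑ i, l i = D from rfl, show ∑ i, (w i)⁻¹ = S from rfl]
  field_simp
  ring

variable [Nonempty ι]

theorem sum_inv_pos_of_pos (hw : ∀ i, 0 < w i) : 0 < ∑ i, (w i)⁻¹ :=
  sum_pos (fun i _ => inv_pos.mpr (hw i)) univ_nonempty

theorem sq_sum_div_sum_inv_le_sum_mul_sq (hw : ∀ i, 0 < w i) :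
    (∑ i, l i) ^ 2 / ∑ i, (w i)⁻¹ ≤ ∑ i, w i * l i ^ 2 := by
  rw [sum_mul_sq_eq_sum_mul_sub_sq_add (fun i => (hw i).ne') (sum_inv_pos_of_pos hw).ne']
  have := sum_nonneg fun i (_ : i ∈ univ) =>
    mul_nonneg (hw i).le (sq_nonneg (l i - (∑ j, l j) / ((∑ j, (w j)⁻¹) * w i)))
  linarith

theorem sum_mul_sq_eq_sq_sum_div_sum_inv_iff (hw : ∀ i, 0 < w i) :
    ∑ i, w i * l i ^ 2 = (∑ i, l i) ^ 2 / ∑ i, (w i)⁻¹ ↔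
      ∀ i, l i = (∑ j, l j) / ((∑ j, (w j)⁻¹) * w i) := by
  rw [sum_mul_sq_eq_sum_mul_sub_sq_add (fun i => (hw i).ne') (sum_inv_pos_of_pos hw).ne',
    add_eq_right, sum_eq_zero_iff_of_nonneg fun i _ => mul_nonneg (hw i).le (sq_nonneg _)]
  simp only [mem_univ, true_implies, mul_eq_zero, (hw _).ne', false_or, sq_eq_zero_iff,
    sub_eq_zero]

end WeightedSumSq

theorem Fin.sum_ite_eq_zero_or_last {R : Type*} [Ring R] {K : ℕ} (hK : 1 ≤ K) (a b : R) :
    ∑ i : Fin (K + 1), (if i = 0 ∨ i = Fin.last K then a else b) = 2 * a + (K - 1) * b := by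
  have h0last : (0 : Fin (K + 1)) ≠ Fin.last K := by
    simp [Fin.ext_iff]
    omega
  have split : ∀ i : Fin (K + 1), (if i = 0 ∨ i = Fin.last K then a else b) =
      b + (if i = 0 then a - b else 0) + (if i = Fin.last K then a - b else 0) := by
    intro i
    by_cases h0 : i = 0
    · simp [h0, h0last]
    · by_cases hL : i = Fin.last K <;> simp [h0, hL, h0last.symm]
  rw [sum_congr rfl fun i _ => split i]
  simp only [sum_add_distrib, sum_const, sum_ite_eq', mem_univ, if_true, nsmul_eq_mul]
  push_cast
  noncomm_ring

theorem Fin.forall_eq_ite_zero_or_last_iff {α : Type*} {K : ℕ} (f : Fin (K + 1) → α) (x y : α) :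
    (∀ i, f i = if i = 0 ∨ i = Fin.last K then x else y) ↔
      f 0 = x ∧ f (Fin.last K) = x ∧ ∀ i, i ≠ 0 → i ≠ Fin.last K → f i = y := by
  constructor
  · intro h
    exact ⟨by simpa using h 0, by simpa using h (Fin.last K),
      fun i h0 hL => by simpa [h0, hL] using h i⟩
  · rintro ⟨h0, hL, hmid⟩ i
    split_ifs with hi
    · rcases hi with rfl | rfl <;> assumption
    · exact hmid i (not_or.mp hi).1 (not_or.mp hi).2

theorem stmt_8_general (K : ℕ) (hK : 1 ≤ K) (θ D : ℝ) (hθ : 0 < θ)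
    (l : Fin (K + 1) → ℝ) (hsum : ∑ i, l i = D) :
    (θ / (4 * K)) * D ^ 2 ≤
        ∑ i, (if i = 0 ∨ i = Fin.last K then 1 / 2 else 1 / 4 : ℝ) * θ * (l i) ^ 2 ∧
      ((∑ i, (if i = 0 ∨ i = Fin.last K then 1 / 2 else 1 / 4 : ℝ) * θ * (l i) ^ 2
          = (θ / (4 * K)) * D ^ 2) ↔
        (l 0 = D / (2 * K) ∧ l (Fin.last K) = D / (2 * K) ∧
          ∀ i, i ≠ 0 → i ≠ Fin.last K → l i = D / K)) := by
  subst hsum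
  set w : Fin (K + 1) → ℝ := fun i => (if i = 0 ∨ i = Fin.last K then 1 / 2 else 1 / 4) * θ
  have hw : ∀ i, 0 < w i := fun i => by positivity
  have hK0 : (K : ℝ) ≠ 0 := by positivity
  have hS : ∑ i, (w i)⁻¹ = 4 * K / θ := by
    have inv_w : ∀ i, (w i)⁻¹ = if i = 0 ∨ i = Fin.last K then 2 / θ else 4 / θ := fun i => by
      split_ifs <;> simp [w, *] <;> field_simp
    rw [sum_congr rfl fun i _ => inv_w i, Fin.sum_ite_eq_zero_or_last hK]
    ring
  have hbound : (∑ i, l i) ^ 2 / ∑ i, (w i)⁻¹ = (θ / (4 * K)) * (∑ i, l i) ^ 2 := by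
    rw [hS]
    field_simp
  have hopt : ∀ i, (∑ j, l j) / ((∑ j, (w j)⁻¹) * w i) =
      if i = 0 ∨ i = Fin.last K then (∑ j, l j) / (2 * K) else (∑ j, l j) / K := fun i => by
    rw [hS]
    split_ifs
    · simp [w, *]
      field_simp
      ring
    · simp [w, *]
      field_simp
  refine ⟨hbound ▸ sq_sum_div_sum_inv_le_sum_mul_sq hw, ?_⟩
  rw [← hbound, sum_mul_sq_eq_sq_sum_div_sum_inv_iff hw]
  simp only [hopt]
  exact Fin.forall_eq_ite_zero_or_last_iff l _ _

/-- CTTL quadratic program: for `K ≥ 1`, `θ > 0`, and nonnegative subsegment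
lengths `l 0, …, l K` summing to `D`, the lost area
`(1/2)θ l₀² + (1/4)θ (l₁² + ⋯ + l_{K-1}²) + (1/2)θ l_K²` is at least `(θ/(4K))·D²`,
with equality iff the boundary lengths are `D/(2K)` and the interior lengths `D/K`. -/
theorem stmt_8 (K : ℕ) (hK : 1 ≤ K) (θ D : ℝ) (hθ : 0 < θ)
    (l : Fin (K + 1) → ℝ) (hl : ∀ i, 0 ≤ l i) (hsum : ∑ i, l i = D) :
    (θ / (4 * K)) * D ^ 2 ≤
        ∑ i, (if i = 0 ∨ i = Fin.last K then 1 / 2 else 1 / 4 : ℝ) * θ * (l i) ^ 2 ∧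
      ((∑ i, (if i = 0 ∨ i = Fin.last K then 1 / 2 else 1 / 4 : ℝ) * θ * (l i) ^ 2
          = (θ / (4 * K)) * D ^ 2) ↔
        (l 0 = D / (2 * K) ∧ l (Fin.last K) = D / (2 * K) ∧
          ∀ i, i ≠ 0 → i ≠ Fin.last K → l i = D / K)) :=
  stmt_8_general K hK θ D hθ l hsum
end

section
/- Under the optimal equidistant placement of K source tasks, the cumulative covered area of Coarse-to-fine Temporal Transfer Learning equals A_K^CTTL = (1 - 1/(4K))·θ·(δ_max - δ_min)², assuming J* = θ(δ_max - δ_min), constant upper-bound performance, deterministic training performance, and symmetric linear generalization gap with slope θ. -/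
open intervalIntegral

lemma abs_int_sym (r : ℝ) (hr : 0 ≤ r) : (∫ x in (-r)..r, |x|) = r ^ 2 := by
  have h1 : (∫ x in (0:ℝ)..r, |x|) = r ^ 2 / 2 := by
    rw [intervalIntegral.integral_congr (g := fun x => x)]
    · rw [integral_id]; ring
    · intro x hx
      rw [Set.uIcc_of_le hr] at hx
      exact abs_of_nonneg hx.1
  have h2 : (∫ x in (-r)..(0:ℝ), |x|) = r ^ 2 / 2 := by
    rw [intervalIntegral.integral_congr (g := fun x => -x)]
    · rw [intervalIntegral.integral_neg, integral_id]; ring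
    · intro x hx
      rw [Set.uIcc_of_le (by linarith)] at hx
      exact abs_of_nonpos hx.2
  have hadd := intervalIntegral.integral_add_adjacent_intervals
    (μ := MeasureTheory.volume) (f := fun x : ℝ => |x|) (a := -r) (b := 0) (c := r)
    (continuous_abs.intervalIntegrable _ _) (continuous_abs.intervalIntegrable _ _)
  rw [h1, h2] at hadd
  rw [← hadd]; ring

lemma tent_int (Js θ c r : ℝ) (hr : 0 ≤ r) :
    (∫ δ in (c - r)..(c + r), (Js - θ * |δ - c|)) = Js * (2 * r) - θ * r ^ 2 := by
  have hi1 : IntervalIntegrable (fun _ : ℝ => Js) MeasureTheory.volume (c - r) (c + r) :=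
    intervalIntegrable_const
  have hi2 : IntervalIntegrable (fun δ : ℝ => θ * |δ - c|) MeasureTheory.volume (c - r) (c + r) :=
    (continuous_const.mul ((continuous_id.sub continuous_const).abs)).intervalIntegrable _ _
  rw [intervalIntegral.integral_sub hi1 hi2, intervalIntegral.integral_const_mul,
    intervalIntegral.integral_comp_sub_right (fun x => |x|) c]
  have : c - r - c = -r := by ring
  rw [this, show c + r - c = r by ring, abs_int_sym r hr, intervalIntegral.integral_const]
  simp only [smul_eq_mul]
  ring

/-- Optimal CTTL coverage: placing `K` source tasks at
`s k = δmax - (2k+1)/(2K)·(δmax - δmin)`, each achieving `J* = θ(δmax - δmin)` and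
degrading linearly with slope `θ`, the integral over `[δmin, δmax]` of the pointwise
best estimated performance equals `(1 - 1/(4K))·θ·(δmax - δmin)²`. -/
theorem stmt_9 (K : ℕ) (hK : 1 ≤ K) (θ δmin δmax Js : ℝ) (hθ : 0 < θ)
    (hlt : δmin < δmax) (hJs : Js = θ * (δmax - δmin))
    (s : ℕ → ℝ)
    (hs : ∀ k, s k = δmax - ((2 * (k : ℝ) + 1) / (2 * K)) * (δmax - δmin))
    (hne : (Finset.range K).Nonempty) :
    (∫ δ in δmin..δmax, (Finset.range K).sup' hne (fun k => Js - θ * |δ - s k|)) =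
      (1 - 1 / (4 * K)) * θ * (δmax - δmin) ^ 2 := by
  have hKpos : (0:ℝ) < K := by exact_mod_cast hK
  set Δ := δmax - δmin with hΔ
  have hΔpos : 0 < Δ := sub_pos.mpr hlt
  set h := Δ / K with hh
  have hhpos : 0 < h := div_pos hΔpos hKpos
  have hsk : ∀ k : ℕ, s k = δmax - ((k : ℝ) * h + h / 2) := by
    intro k
    rw [hs, hh]
    field_simp
  set f : ℝ → ℝ := fun δ => (Finset.range K).sup' hne (fun k => Js - θ * |δ - s k|) with hfdef
  have hcont : Continuous f := by
    rw [continuous_iff_continuousAt]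
    intro x
    exact ContinuousAt.finset_sup'_apply hne (fun i _ => by fun_prop)
  set a : ℕ → ℝ := fun j => δmax - (j : ℝ) * h with ha
  -- pointwise identification on each subinterval
  have hpt : ∀ k ∈ Finset.range K, ∀ δ ∈ Set.uIcc (s k - h / 2) (s k + h / 2),
      f δ = Js - θ * |δ - s k| := by
    intro k hk δ hδ
    rw [Set.uIcc_of_le (by linarith)] at hδ
    have hx : |δ - s k| ≤ h / 2 := by
      rw [abs_le]; constructor <;> [linarith [hδ.1]; linarith [hδ.2]]
    apply le_antisymm
    · apply Finset.sup'_le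
      intro j hj
      apply sub_le_sub_left
      apply mul_le_mul_of_nonneg_left _ hθ.le
      by_cases hjk : j = k
      · subst hjk; exact le_rfl
      set x := δ - s k with hxdef
      have key : δ - s j = x + ((j : ℝ) - k) * h := by
        rw [hxdef, hsk j, hsk k]; ring
      have h1 : (1:ℝ) ≤ |(j:ℝ) - k| := by
        rcases lt_or_gt_of_ne hjk with hl | hg
        · have : (j:ℝ) + 1 ≤ k := by exact_mod_cast hl
          rw [abs_sub_comm, abs_of_nonneg (by linarith)]; linarith
        · have : (k:ℝ) + 1 ≤ j := by exact_mod_cast hg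
          rw [abs_of_nonneg (by linarith)]; linarith
      have hd : h ≤ |((j:ℝ) - k) * h| := by
        rw [abs_mul, abs_of_pos hhpos]; nlinarith
      have habs : |((j:ℝ) - k) * h| - |x| ≤ |x + ((j:ℝ) - k) * h| := by
        have := abs_sub_abs_le_abs_sub (((j:ℝ) - k) * h) (-x)
        rw [abs_neg, sub_neg_eq_add, add_comm] at this
        exact this
      rw [key]
      linarith
    · exact Finset.le_sup' (fun k => Js - θ * |δ - s k|) hk
  -- integral over each subinterval
  have hterm : ∀ k ∈ Finset.range K,
      (∫ δ in a (k + 1)..a k, f δ) = Js * h - θ * (h / 2) ^ 2 := by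
    intro k hk
    have e1 : a (k + 1) = s k - h / 2 := by
      rw [ha, hsk k]; push_cast; ring
    have e2 : a k = s k + h / 2 := by
      rw [ha, hsk k]; ring
    rw [e1, e2, intervalIntegral.integral_congr (hpt k hk),
      tent_int Js θ (s k) (h / 2) (by linarith)]
    ring
  have hsum := intervalIntegral.sum_integral_adjacent_intervals (a := a) (n := K)
    (f := f) (μ := MeasureTheory.volume)
    (fun k _ => hcont.intervalIntegrable _ _)
  have ha0 : a 0 = δmax := by simp [ha]
  have haK : a K = δmin := by
    rw [ha, hh]
    field_simp
    rw [hΔ]; ring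
  have h2 : (∫ δ in δmax..δmin, f δ) = ∑ k ∈ Finset.range K, ∫ δ in a k..a (k + 1), f δ := by
    rw [hsum, ha0, haK]
  have h3 : (∫ δ in δmin..δmax, f δ) = ∑ k ∈ Finset.range K, ∫ δ in a (k + 1)..a k, f δ := by
    rw [intervalIntegral.integral_symm δmax δmin, h2, ← Finset.sum_neg_distrib]
    exact Finset.sum_congr rfl fun k _ => (intervalIntegral.integral_symm _ _).symm
  rw [h3, Finset.sum_congr rfl hterm, Finset.sum_const, Finset.card_range, nsmul_eq_mul,
    hJs, hh]
  field_simp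
  ring
end
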